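/- arXiv:1502.02470 — 2 statements merged into one kernel-verified Lean document; each statement's English description precedes it below -/
import Mathlib

section
/- The coefficient of z^n in the formal power series (1/(z;q²)_∞) · Σ_{i≥0} (-z)^i q^{i(i+1)} / ((q²;q²)_i (1-c²q^{2i})) equals 1/(c²;q²)_{n+1}. -/
open scoped BigOperators

/-- Finite q-Pochhammer symbol `(a;q)_n`. -/
noncomputable def qPoch (a q : ℂ) (n : ℕ) : ℂ := ∏ k ∈ Finset.range n, (1 - a * q ^ k)

/-- Infinite q-Pochhammer symbol `(a;q)_∞`. -/
noncomputable def qPochInf (a q : ℂ) : ℂ := ∏' k : ℕ, (1 - a * q ^ k)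

/-- q-Pochhammer symbol with integer index: `(a;q)_m`, where for negative `m`
`(a;q)_{-k} = 1/∏_{j=1}^{k}(1 - a q^{-j})`. -/
noncomputable def qPochZ (a q : ℂ) (m : ℤ) : ℂ :=
  if 0 ≤ m then qPoch a q m.toNat
  else 1 / ∏ k ∈ Finset.range (-m).toNat, (1 - a * q ^ (-(k : ℤ) - 1))

/-- `(α, β)` is a Bailey pair relative to `a` in base `q`. -/
def IsBaileyPair (q a : ℂ) (α β : ℕ → ℂ) : Prop :=
  ∀ n : ℕ, β n = ∑ j ∈ Finset.range (n + 1),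
    α j / (qPoch q q (n - j) * qPoch (a * q) q (n + j))

/-- The Andrews–Hickerson Bailey pair `α*_n(a,b,c,q)` (Lemma 2.1). -/
noncomputable def alphaStar (a b c q : ℂ) (n : ℕ) : ℂ :=
  q ^ (n ^ 2) * (b * c) ^ n * (1 - a * q ^ (2 * n)) * qPoch (a / b) q n * qPoch (a / c) q n /
      ((1 - a) * qPoch (b * q) q n * qPoch (c * q) q n) *
    ∑ j ∈ Finset.range (n + 1),
      (-1 : ℂ) ^ j * (1 - a * q ^ (2 * (j : ℤ) - 1)) * qPochZ a q ((j : ℤ) - 1) *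
          qPoch b q j * qPoch c q j /
        (q ^ (j * (j - 1) / 2) * (b * c) ^ j * qPoch q q j * qPoch (a / b) q j *
          qPoch (a / c) q j)

/-!
Euler's identity `1/(z;Q)_∞ = ∑ z^m/(Q;Q)_m` follows from the functional equation
`(1 - z) e(z) = e(Qz)` of the right-hand side `e`, iterated `n` times and letting `n → ∞`.
With `Q = q²` and `x = c²`, the Cauchy product then reduces the theorem to the partial fraction
expansion of `1/(x;Q)_{n+1}` in `x`, whose coefficient at `1/(1 - xQ^l)` is
`(-1)^l Q^{l(l+1)/2} / ((Q;Q)_k (Q;Q)_l)` with `k + l = n`. That expansion is proved by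
induction on `n`, the inductive step resting on the vanishing of the alternating sum
`∑_{k+l=n+1} (-1)^l Q^{l(l-1)/2} / ((Q;Q)_k (Q;Q)_l)` (the q-binomial theorem at `x = 1`).
-/

open Finset Filter Topology

variable {Q x z : ℂ}

lemma qPoch_zero (a Q : ℂ) : qPoch a Q 0 = 1 := prod_range_zero _

lemma qPoch_succ (a Q : ℂ) (n : ℕ) : qPoch a Q (n + 1) = qPoch a Q n * (1 - a * Q ^ n) :=
  prod_range_succ _ _

lemma qPoch_self_succ (Q : ℂ) (n : ℕ) :
    qPoch Q Q (n + 1) = qPoch Q Q n * (1 - Q ^ (n + 1)) := by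
  rw [qPoch_succ, ← pow_succ']

lemma one_sub_pow_succ_ne_zero (hQ : ∀ n, qPoch Q Q n ≠ 0) (n : ℕ) : 1 - Q ^ (n + 1) ≠ 0 :=
  right_ne_zero_of_mul (qPoch_self_succ Q n ▸ hQ (n + 1))

lemma qPoch_self_ne_zero (hQ : ‖Q‖ < 1) (n : ℕ) : qPoch Q Q n ≠ 0 :=
  prod_ne_zero_iff.2 fun k _ h => by
    have : ‖Q * Q ^ k‖ < 1 := by
      rw [← pow_succ', norm_pow]; exact pow_lt_one₀ (norm_nonneg Q) hQ k.succ_ne_zero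
    rw [← sub_eq_zero.1 h, norm_one] at this
    exact this.false

lemma pow_choose_succ_two (Q : ℂ) (k : ℕ) : Q ^ (k + 1).choose 2 = Q ^ k.choose 2 * Q ^ k := by
  rw [Nat.choose_succ_succ', Nat.choose_one_right, pow_add, mul_comm]

theorem sum_antidiagonal_alternating_qBinomial_eq_zero (hQ : ∀ n, qPoch Q Q n ≠ 0) (n : ℕ) :
    ∑ p ∈ antidiagonal (n + 1),
      (-1) ^ p.2 * Q ^ p.2.choose 2 / (qPoch Q Q p.1 * qPoch Q Q p.2) = 0 := by
  set t : ℕ × ℕ → ℂ := fun p =>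
    (-1) ^ p.2 * Q ^ p.2.choose 2 / (qPoch Q Q p.1 * qPoch Q Q p.2)
  set u : ℕ × ℕ → ℂ := fun p =>
    (-1) ^ p.2 * Q ^ p.2.choose 2 * Q ^ p.2 / (qPoch Q Q p.1 * qPoch Q Q p.2)
  refine (mul_eq_zero.1 ?_).resolve_left (one_sub_pow_succ_ne_zero hQ n)
  have hsplit : ∀ p ∈ antidiagonal (n + 1),
      (1 - Q ^ (n + 1)) * t p = (1 - Q ^ p.2) * t p + Q ^ p.2 * ((1 - Q ^ p.1) * t p) := by
    intro p hp
    rw [← mem_antidiagonal.1 hp, pow_add]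
    ring
  have hleft : ∀ i j, (1 - Q ^ (j + 1)) * t (i, j + 1) = -u (i, j) := by
    intro i j
    simp only [t, u, qPoch_self_succ, pow_choose_succ_two]
    have := hQ i; have := hQ j; have := one_sub_pow_succ_ne_zero hQ j
    field_simp
    ring
  have hright : ∀ i j, Q ^ j * ((1 - Q ^ (i + 1)) * t (i + 1, j)) = u (i, j) := by
    intro i j
    simp only [t, u, qPoch_self_succ]
    have := hQ i; have := hQ j; have := one_sub_pow_succ_ne_zero hQ i
    field_simp
  rw [mul_sum, sum_congr rfl hsplit, sum_add_distrib, Nat.sum_antidiagonal_succ',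
    Nat.sum_antidiagonal_succ]
  simp only [pow_zero, sub_self, zero_mul, mul_zero, zero_add, hleft, hright, sum_neg_distrib,
    neg_add_cancel]

theorem sum_antidiagonal_partialFraction (hQ : ∀ n, qPoch Q Q n ≠ 0)
    (hx : ∀ k, 1 - x * Q ^ k ≠ 0) (n : ℕ) :
    ∑ p ∈ antidiagonal n, (-1) ^ p.2 * Q ^ (p.2 + 1).choose 2 /
        (qPoch Q Q p.1 * qPoch Q Q p.2 * (1 - x * Q ^ p.2)) = 1 / qPoch x Q (n + 1) := by
  induction n with
  | zero => simp [qPoch_succ, qPoch_zero]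
  | succ n ih =>
    set t : ℕ × ℕ → ℂ := fun p => (-1) ^ p.2 * Q ^ (p.2 + 1).choose 2 /
        (qPoch Q Q p.1 * qPoch Q Q p.2 * (1 - x * Q ^ p.2))
    -- from `1 - x Q^(k+l) = Q^k (1 - x Q^l) + (1 - Q^k)`
    have hsplit : ∀ p ∈ antidiagonal (n + 1), t p * (1 - x * Q ^ (n + 1)) =
        Q ^ (n + 1) * ((-1) ^ p.2 * Q ^ p.2.choose 2 / (qPoch Q Q p.1 * qPoch Q Q p.2)) +
          (1 - Q ^ p.1) * t p := by
      intro p hp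
      rw [← mem_antidiagonal.1 hp]
      simp only [t, pow_choose_succ_two]
      have := hQ p.1; have := hQ p.2
      have : 1 - Q ^ p.2 * x ≠ 0 := mul_comm x (Q ^ p.2) ▸ hx p.2
      field_simp
      ring
    have hshift : ∀ i j, (1 - Q ^ (i + 1)) * t (i + 1, j) = t (i, j) := by
      intro i j
      simp only [t, qPoch_self_succ]
      have := hQ i; have := hQ j; have := hx j; have := one_sub_pow_succ_ne_zero hQ i
      field_simp
    have hrec : (∑ p ∈ antidiagonal (n + 1), t p) * (1 - x * Q ^ (n + 1)) =
        1 / qPoch x Q (n + 1) := by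
      rw [sum_mul, sum_congr rfl hsplit, sum_add_distrib, ← mul_sum,
        sum_antidiagonal_alternating_qBinomial_eq_zero hQ, Nat.sum_antidiagonal_succ]
      simp only [hshift, pow_zero, sub_self, zero_mul, mul_zero, zero_add, ih]
    rw [qPoch_succ x Q (n + 1), ← one_div_mul_one_div, ← hrec]
    field_simp [hx (n + 1)]

noncomputable def qExp (Q z : ℂ) : ℂ := ∑' m : ℕ, z ^ m / qPoch Q Q m

lemma norm_pow_mul_lt_one (hQ : ‖Q‖ < 1) (hz : ‖z‖ < 1) (n : ℕ) :
    ‖Q ^ n * z‖ < 1 := by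
  rw [norm_mul, norm_pow]
  exact mul_lt_one_of_nonneg_of_lt_one_right (pow_le_one₀ (norm_nonneg Q) hQ.le)
    (norm_nonneg z) hz

lemma summable_norm_qExp (hQ : ‖Q‖ < 1) (hz : ‖z‖ < 1) :
    Summable fun m : ℕ => ‖z ^ m / qPoch Q Q m‖ := by
  have hratio : Tendsto (fun m : ℕ => ‖z‖ / ‖1 - Q ^ (m + 1)‖) atTop (𝓝 ‖z‖) := by
    have hpow := (tendsto_pow_atTop_nhds_zero_of_norm_lt_one hQ).comp (tendsto_add_atTop_nat 1)
    have h := (tendsto_const_nhds (x := ‖z‖)).div (hpow.const_sub 1).norm (by simp)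
    rwa [sub_zero, norm_one, div_one] at h
  have hr : ‖z‖ < (1 + ‖z‖) / 2 := by linarith
  refine summable_of_ratio_norm_eventually_le (r := (1 + ‖z‖) / 2) (by linarith)
    ((hratio.eventually (ge_mem_nhds hr)).mono fun m hm => ?_)
  calc ‖‖z ^ (m + 1) / qPoch Q Q (m + 1)‖‖
      = ‖z‖ / ‖1 - Q ^ (m + 1)‖ * ‖z ^ m / qPoch Q Q m‖ := by
        rw [norm_norm, qPoch_self_succ, pow_succ', norm_div, norm_div, norm_mul, norm_mul]; ring
    _ ≤ (1 + ‖z‖) / 2 * ‖‖z ^ m / qPoch Q Q m‖‖ := by rw [norm_norm]; gcongr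

lemma one_sub_mul_qExp (hQ : ‖Q‖ < 1) (hz : ‖z‖ < 1) :
    (1 - z) * qExp Q z = qExp Q (Q * z) := by
  have hQz : ‖Q * z‖ < 1 := by simpa using norm_pow_mul_lt_one hQ hz 1
  have hf := (summable_norm_qExp hQ hz).of_norm
  have hg := (summable_norm_qExp hQ hQz).of_norm
  have hshift : ∀ m : ℕ,
      z ^ (m + 1) / qPoch Q Q (m + 1) - (Q * z) ^ (m + 1) / qPoch Q Q (m + 1) =
        z * (z ^ m / qPoch Q Q m) := fun m => by
    calc _ = z ^ (m + 1) * (1 - Q ^ (m + 1)) / (qPoch Q Q m * (1 - Q ^ (m + 1))) := by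
          rw [qPoch_self_succ]; ring
      _ = z * (z ^ m / qPoch Q Q m) := by
          rw [mul_div_mul_right _ _ (one_sub_pow_succ_ne_zero (qPoch_self_ne_zero hQ) m),
            pow_succ', mul_div_assoc]
  have hdiff : qExp Q z - qExp Q (Q * z) = z * qExp Q z := by
    rw [qExp, qExp, ← hf.tsum_sub hg, (hf.sub hg).tsum_eq_zero_add, tsum_congr hshift,
      tsum_mul_left]
    simp
  linear_combination hdiff

lemma prod_range_mul_qExp (hQ : ‖Q‖ < 1) (hz : ‖z‖ < 1) (n : ℕ) :
    (∏ k ∈ range n, (1 - z * Q ^ k)) * qExp Q z = qExp Q (Q ^ n * z) := by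
  induction n with
  | zero => simp
  | succ n ih =>
    rw [prod_range_succ, mul_comm _ (1 - z * Q ^ n), mul_assoc, ih, mul_comm z,
      one_sub_mul_qExp hQ (norm_pow_mul_lt_one hQ hz n), ← mul_assoc, ← pow_succ']

lemma tendsto_qExp_pow_mul (hQ : ‖Q‖ < 1) (hz : ‖z‖ < 1) :
    Tendsto (fun n : ℕ => qExp Q (Q ^ n * z)) atTop (𝓝 1) := by
  have hlim : ∑' m : ℕ, (0 * z) ^ m / qPoch Q Q m = 1 := by
    rw [tsum_eq_single 0 fun m hm => by simp [hm]]
    simp [qPoch_zero]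
  rw [← hlim]
  refine tendsto_tsum_of_dominated_convergence (summable_norm_qExp hQ hz) (fun m => ?_)
    (Eventually.of_forall fun n m => ?_)
  · exact (((tendsto_pow_atTop_nhds_zero_of_norm_lt_one hQ).mul_const z).pow m).div_const _
  · rw [norm_div, norm_div, norm_pow, norm_pow]
    gcongr
    rw [norm_mul, norm_pow]
    exact mul_le_of_le_one_left (norm_nonneg z) (pow_le_one₀ (norm_nonneg Q) hQ.le)

theorem tprod_one_sub_mul_pow_mul_qExp (hQ : ‖Q‖ < 1) (hz : ‖z‖ < 1) :
    (∏' k : ℕ, (1 - z * Q ^ k)) * qExp Q z = 1 := by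
  have hmult : Multipliable fun k : ℕ => 1 - z * Q ^ k := by
    simpa [sub_eq_add_neg] using
      multipliable_one_add_of_summable (f := fun k : ℕ => -(z * Q ^ k))
        (by simpa using (summable_geometric_of_lt_one (norm_nonneg Q) hQ).mul_left ‖z‖)
  refine tendsto_nhds_unique ?_ (tendsto_qExp_pow_mul hQ hz)
  simpa only [prod_range_mul_qExp hQ hz] using hmult.hasProd.tendsto_prod_nat.mul_const (qExp Q z)

lemma bddAbove_range_norm_inv_one_sub_mul_pow (hQ : ‖Q‖ < 1) (x : ℂ) :
    BddAbove (Set.range fun k : ℕ => ‖(1 - x * Q ^ k)⁻¹‖) := by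
  have h := ((tendsto_pow_atTop_nhds_zero_of_norm_lt_one hQ).const_mul x).const_sub 1
  rw [mul_zero, sub_zero] at h
  exact (h.inv₀ one_ne_zero).norm.bddAbove_range

lemma summable_norm_partialFraction_series (hQ : ‖Q‖ < 1) (hz : ‖z‖ < 1) (x : ℂ) :
    Summable fun i : ℕ =>
      ‖(-z) ^ i * Q ^ (i + 1).choose 2 / (qPoch Q Q i * (1 - x * Q ^ i))‖ := by
  obtain ⟨B, hB⟩ := bddAbove_range_norm_inv_one_sub_mul_pow hQ x
  refine .of_nonneg_of_le (fun _ => norm_nonneg _) (fun i => ?_)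
    ((summable_norm_qExp hQ (z := -z) (by rwa [norm_neg])).mul_left B)
  calc _ = ‖(-z) ^ i / qPoch Q Q i‖ *
        (‖Q ^ (i + 1).choose 2‖ * ‖(1 - x * Q ^ i)⁻¹‖) := by
        simp only [norm_mul, norm_div, norm_inv]
        ring
    _ ≤ ‖(-z) ^ i / qPoch Q Q i‖ * (1 * B) := by
        gcongr
        · rw [norm_pow]; exact pow_le_one₀ (norm_nonneg Q) hQ.le
        · exact hB ⟨i, rfl⟩
    _ = B * ‖(-z) ^ i / qPoch Q Q i‖ := by ring

theorem qExp_mul_tsum_partialFraction_series (hQ : ‖Q‖ < 1) (hx : ∀ k, 1 - x * Q ^ k ≠ 0)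
    (hz : ‖z‖ < 1) :
    qExp Q z * ∑' i : ℕ, (-z) ^ i * Q ^ (i + 1).choose 2 / (qPoch Q Q i * (1 - x * Q ^ i)) =
      ∑' n : ℕ, z ^ n / qPoch x Q (n + 1) := by
  rw [qExp, tsum_mul_tsum_eq_tsum_sum_antidiagonal_of_summable_norm (summable_norm_qExp hQ hz)
    (summable_norm_partialFraction_series hQ hz x)]
  refine tsum_congr fun n => ?_
  rw [div_eq_mul_one_div (z ^ n), ← sum_antidiagonal_partialFraction (qPoch_self_ne_zero hQ) hx,
    mul_sum]
  refine sum_congr rfl fun p hp => ?_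
  rw [← mem_antidiagonal.1 hp, neg_pow, pow_add]
  have := qPoch_self_ne_zero hQ p.1; have := qPoch_self_ne_zero hQ p.2; have := hx p.2
  field_simp

lemma sq_pow_choose_succ_two (q : ℂ) (l : ℕ) :
    (q ^ 2) ^ (l + 1).choose 2 = q ^ (l * (l + 1)) := by
  rw [← pow_mul]
  congr 1
  have := Nat.add_one_mul_choose_eq l 1
  simp only [Nat.choose_one_right] at this
  linarith

theorem stmt5 (q c : ℂ) (hq : ‖q‖ < 1) (hc : ∀ i : ℕ, c ^ 2 * q ^ (2 * i) ≠ 1) :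
    ∀ z : ℂ, ‖z‖ < 1 →
      (1 / ∏' k : ℕ, (1 - z * q ^ (2 * k))) *
          ∑' i : ℕ, (-z) ^ i * q ^ (i * (i + 1)) /
            (qPoch (q ^ 2) (q ^ 2) i * (1 - c ^ 2 * q ^ (2 * i))) =
        ∑' n : ℕ, z ^ n / qPoch (c ^ 2) (q ^ 2) (n + 1) := by
  intro z hz
  have hQ : ‖q ^ 2‖ < 1 := by rw [norm_pow]; exact pow_lt_one₀ (norm_nonneg q) hq two_ne_zero
  have hx : ∀ i : ℕ, 1 - c ^ 2 * (q ^ 2) ^ i ≠ 0 := fun i =>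
    sub_ne_zero.2 fun h => hc i (by rw [pow_mul]; exact h.symm)
  simp_rw [← sq_pow_choose_succ_two, pow_mul q 2]
  rw [← eq_one_div_of_mul_eq_one_right (tprod_one_sub_mul_pow_mul_qExp hQ hz)]
  exact qExp_mul_tsum_partialFraction_series hQ hx hz
end

section
/- G₁(q) := Σ_{n≥0} q^{5n²+4n}(1-q^{2n+1}) Σ_{|j|≤n} (-1)^j q^{-j²} satisfies G₁(q) = f_{8,12,8}(q⁸, q⁸, q) + q⁹ f_{8,12,8}(q^{18}, q^{18}, q), where f_{a,b,c}(x,y,q) = (Σ_{r,s≥0} - Σ_{r,s<0}) (-1)^{r+s} x^r y^s q^{a r(r-1)/2 + b r s + c s(s-1)/2}. -/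
/-!
Put `Q(n, j) = (-1)^j q^(5n² + 4n - j²)` (`g₁Term q n j`). The `n`-th summand of `G₁` is
`∑_{|j| ≤ n} (Q(n, j) - Q(-n-1, j))`. With `n = r + s` and `j = r - s`, the summand of
`f_{8,12,8}(q⁸, q⁸, q)` at `(r, s)` is `Q(n, j)`, and that of `q⁹ f_{8,12,8}(q¹⁸, q¹⁸, q)` is
`Q(n + 1, j)`; at `(-r-1, -s-1)` they are `Q(-n-2, j)` and `Q(-n-1, j)`. Every `j` with
`|j| ≤ n` is `r - s` for exactly one `(r, s)` with `r + s = n` or `r + s = n - 1`, according to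
the parity of `n - j`, so regrouping the absolutely convergent double sums along antidiagonals
gives the identity.
-/

open scoped BigOperators

/-- Hecke-type double sum `f_{a,b,c}(x,y,q)`: the sum over `r,s ≥ 0` minus the sum
over `r,s < 0` of `(-1)^{r+s} x^r y^s q^{ar(r-1)/2+brs+cs(s-1)/2}`. -/
noncomputable def heckeF (a b c : ℤ) (x y q : ℂ) : ℂ :=
  (∑' p : ℕ × ℕ, (-1 : ℂ) ^ (p.1 + p.2) * x ^ p.1 * y ^ p.2 *
      q ^ (a * ((p.1 : ℤ) * ((p.1 : ℤ) - 1) / 2) + b * p.1 * p.2 +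
        c * ((p.2 : ℤ) * ((p.2 : ℤ) - 1) / 2))) -
  (∑' p : ℕ × ℕ, (-1 : ℂ) ^ ((-(p.1 : ℤ) - 1) + (-(p.2 : ℤ) - 1)) *
      x ^ (-(p.1 : ℤ) - 1) * y ^ (-(p.2 : ℤ) - 1) *
      q ^ (a * ((-(p.1 : ℤ) - 1) * ((-(p.1 : ℤ) - 1) - 1) / 2) +
        b * (-(p.1 : ℤ) - 1) * (-(p.2 : ℤ) - 1) +
        c * ((-(p.2 : ℤ) - 1) * ((-(p.2 : ℤ) - 1) - 1) / 2)))

open Finset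

theorem HasSum.sum_antidiagonal {M A : Type*} [AddCommMonoid M] [TopologicalSpace M]
    [ContinuousAdd M] [RegularSpace M] [AddMonoid A] [HasAntidiagonal A]
    {f : A × A → M} {a : M} (h : HasSum f a) :
    HasSum (fun n => ∑ p ∈ antidiagonal n, f p) a :=
  (HasAntidiagonal.sigmaAntidiagonalEquivProd.hasSum_iff.mpr h).sigma
    fun n => (antidiagonal n).hasSum f

theorem sum_Icc_neg_eq_sum_antidiagonal_add {M : Type*} [AddCommMonoid M] (f : ℤ → M) (n : ℕ) :
    ∑ j ∈ Icc (-((n + 1 : ℕ) : ℤ)) ((n + 1 : ℕ) : ℤ), f j =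
      ∑ p ∈ antidiagonal (n + 1), f (p.1 - p.2) + ∑ p ∈ antidiagonal n, f (p.1 - p.2) := by
  induction n with
  | zero =>
    rw [show Icc (-((0 + 1 : ℕ) : ℤ)) ((0 + 1 : ℕ) : ℤ) = {-1, 0, 1} by decide]
    simp [Nat.antidiagonal_succ, add_comm, add_assoc]
  | succ n ih =>
    have hIcc : Icc (-((n + 2 : ℕ) : ℤ)) ((n + 2 : ℕ) : ℤ) =
        insert (-((n + 2 : ℕ) : ℤ))
          (insert ((n + 2 : ℕ) : ℤ) (Icc (-((n + 1 : ℕ) : ℤ)) ((n + 1 : ℕ) : ℤ))) := by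
      ext j
      simp only [mem_Icc, mem_insert]
      omega
    rw [hIcc, sum_insert (by simp only [mem_insert, mem_Icc]; omega),
      sum_insert (by simp only [mem_Icc]; omega), ih, Nat.antidiagonal_succ_succ', sum_cons,
      sum_cons, sum_map]
    simp only [Function.Embedding.coe_prodMap, Function.Embedding.coeFn_mk, Prod.map_fst,
      Prod.map_snd, Nat.succ_eq_add_one, Nat.cast_add, Nat.cast_one, Nat.cast_zero, zero_sub,
      sub_zero, add_sub_add_right_eq_sub]
    abel

theorem hasSum_sum_Icc_of_hasSum_antidiagonal {M : Type*} [AddCommGroup M] [TopologicalSpace M]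
    [IsTopologicalAddGroup M] {g : ℕ → ℤ → M} {a b : M}
    (ha : HasSum (fun p : ℕ × ℕ => g (p.1 + p.2) ((p.1 : ℤ) - p.2)) a)
    (hb : HasSum (fun p : ℕ × ℕ => g (p.1 + p.2 + 1) ((p.1 : ℤ) - p.2)) b) :
    HasSum (fun n : ℕ => ∑ j ∈ Icc (-(n : ℤ)) n, g n j) (a + b) := by
  set A : ℕ → M := fun n => ∑ p ∈ antidiagonal n, g n ((p.1 : ℤ) - p.2)
  have hA : HasSum A a := by
    refine ha.sum_antidiagonal.congr_fun fun n => sum_congr rfl fun p hp => ?_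
    rw [mem_antidiagonal.mp hp]
  have hB : HasSum (fun n => ∑ p ∈ antidiagonal n, g (n + 1) ((p.1 : ℤ) - p.2)) b := by
    refine hb.sum_antidiagonal.congr_fun fun n => sum_congr rfl fun p hp => ?_
    rw [mem_antidiagonal.mp hp]
  rw [← hasSum_nat_add_iff' 1]
  convert ((hasSum_nat_add_iff' 1).mpr hA).add hB using 1
  · exact funext fun n => sum_Icc_neg_eq_sum_antidiagonal_add (g (n + 1)) n
  · simp [A]
    abel

theorem summable_of_norm_le_pow {E : Type*} [NormedAddCommGroup E] [CompleteSpace E]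
    {g : ℕ → ℤ → E} {ρ : ℝ} (hρ0 : 0 ≤ ρ) (hρ : ρ < 1)
    (hg : ∀ (n : ℕ) (j : ℤ), |j| ≤ n → ‖g n j‖ ≤ ρ ^ n) (k : ℕ) :
    Summable fun p : ℕ × ℕ => g (p.1 + p.2 + k) ((p.1 : ℤ) - p.2) := by
  have hgeom := summable_geometric_of_lt_one hρ0 hρ
  refine Summable.of_norm_bounded (hgeom.mul_of_nonneg hgeom (fun _ => by positivity)
    (fun _ => by positivity)) fun p => ?_
  calc ‖g (p.1 + p.2 + k) ((p.1 : ℤ) - p.2)‖ ≤ ρ ^ (p.1 + p.2 + k) :=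
        hg _ _ (by rw [abs_le]; push_cast; omega)
    _ ≤ ρ ^ (p.1 + p.2) := pow_le_pow_of_le_one hρ0 hρ.le (by omega)
    _ = ρ ^ p.1 * ρ ^ p.2 := pow_add ..

noncomputable def g₁Term (q : ℂ) (n j : ℤ) : ℂ := (-1) ^ j * q ^ (5 * n ^ 2 + 4 * n - j ^ 2)

theorem norm_g₁Term_le {q : ℂ} (hq : ‖q‖ ≤ 1) (hq0 : q ≠ 0) {m j : ℤ} {n : ℕ}
    (h : n ≤ 5 * m ^ 2 + 4 * m - j ^ 2) : ‖g₁Term q m j‖ ≤ ‖q‖ ^ n := by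
  rw [g₁Term, norm_mul, norm_zpow, norm_zpow, norm_neg, norm_one, one_zpow, one_mul,
    ← zpow_natCast]
  exact zpow_le_zpow_right_of_le_one₀ (norm_pos_iff.mpr hq0) hq h

theorem g₁Term_neg_right (q : ℂ) (n j : ℤ) : g₁Term q n (-j) = g₁Term q n j := by
  rw [g₁Term, g₁Term, zpow_neg, ← inv_zpow, inv_neg_one, neg_sq]

theorem g₁_summand_eq {q : ℂ} (hq0 : q ≠ 0) (n : ℕ) :
    q ^ (5 * n ^ 2 + 4 * n) * (1 - q ^ (2 * n + 1)) *
        ∑ j ∈ Icc (-(n : ℤ)) (n : ℤ), (-1 : ℂ) ^ j * q ^ (-j ^ 2) =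
      ∑ j ∈ Icc (-(n : ℤ)) n, g₁Term q n j - ∑ j ∈ Icc (-(n : ℤ)) n, g₁Term q (-(n + 1)) j := by
  rw [mul_sum, ← sum_sub_distrib]
  refine sum_congr rfl fun j _ => ?_
  have h₁ : q ^ (5 * (n : ℤ) ^ 2 + 4 * n - j ^ 2) = q ^ (5 * n ^ 2 + 4 * n) * q ^ (-j ^ 2) := by
    rw [← zpow_natCast, ← zpow_add₀ hq0]
    push_cast
    ring_nf
  have h₂ : q ^ (5 * (-((n : ℤ) + 1)) ^ 2 + 4 * -((n : ℤ) + 1) - j ^ 2) =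
      q ^ (5 * n ^ 2 + 4 * n) * q ^ (2 * n + 1) * q ^ (-j ^ 2) := by
    rw [← pow_add, ← zpow_natCast, ← zpow_add₀ hq0]
    push_cast
    ring_nf
  rw [g₁Term, g₁Term, h₁, h₂]
  ring

noncomputable def heckeSummand (a b c : ℤ) (x y q : ℂ) (r s : ℤ) : ℂ :=
  (-1) ^ (r + s) * x ^ r * y ^ s *
    q ^ (a * (r * (r - 1) / 2) + b * r * s + c * (s * (s - 1) / 2))

theorem heckeF_eq_tsum_sub_tsum (a b c : ℤ) (x y q : ℂ) :
    heckeF a b c x y q = ∑' p : ℕ × ℕ, heckeSummand a b c x y q p.1 p.2 -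
      ∑' p : ℕ × ℕ, heckeSummand a b c x y q (-p.1 - 1) (-p.2 - 1) := by
  simp only [heckeF, heckeSummand, zpow_natCast, ← Nat.cast_add]

theorem heckeSummand_eight_twelve_eight {q : ℂ} (hq0 : q ≠ 0) (k : ℕ) (r s : ℤ) :
    heckeSummand 8 12 8 (q ^ k) (q ^ k) q r s =
      (-1) ^ (r - s) * q ^ (5 * (r + s) ^ 2 + (k - 4) * (r + s) - (r - s) ^ 2) := by
  have hpow (t : ℤ) : (q ^ k) ^ t = q ^ (k * t) := by rw [← zpow_natCast, ← zpow_mul]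
  have hsign : (-1 : ℂ) ^ (r + s) = (-1) ^ (r - s) := by
    simp only [neg_one_zpow_eq_ite, Int.even_add, Int.even_sub]
  have hhalf (t : ℤ) : 8 * (t * (t - 1) / 2) = 4 * (t * (t - 1)) := by
    have := Int.two_mul_ediv_two_of_even (Int.even_mul_pred_self t)
    linarith
  rw [heckeSummand, hpow, hpow, hsign, hhalf, hhalf, mul_assoc, mul_assoc, ← zpow_add₀ hq0,
    ← zpow_add₀ hq0]
  ring_nf

theorem heckeSummand_q8_eq_g₁Term {q : ℂ} (hq0 : q ≠ 0) (r s : ℤ) :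
    heckeSummand 8 12 8 (q ^ 8) (q ^ 8) q r s = g₁Term q (r + s) (r - s) := by
  rw [heckeSummand_eight_twelve_eight hq0, g₁Term]
  norm_num

theorem pow_nine_mul_heckeSummand_q18_eq_g₁Term {q : ℂ} (hq0 : q ≠ 0) (r s : ℤ) :
    q ^ 9 * heckeSummand 8 12 8 (q ^ 18) (q ^ 18) q r s = g₁Term q (r + s + 1) (r - s) := by
  rw [heckeSummand_eight_twelve_eight hq0, g₁Term, mul_left_comm, ← zpow_natCast,
    ← zpow_add₀ hq0]
  ring_nf

theorem heckeF_q8_eq {q : ℂ} (hq0 : q ≠ 0) :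
    heckeF 8 12 8 (q ^ 8) (q ^ 8) q =
      ∑' p : ℕ × ℕ, g₁Term q ↑(p.1 + p.2) ((p.1 : ℤ) - p.2) -
        ∑' p : ℕ × ℕ, g₁Term q (-(↑(p.1 + p.2 + 1) + 1)) ((p.1 : ℤ) - p.2) := by
  rw [heckeF_eq_tsum_sub_tsum]
  congr 1 <;> refine tsum_congr fun p => ?_ <;> rw [heckeSummand_q8_eq_g₁Term hq0]
  · push_cast
    rfl
  · rw [← g₁Term_neg_right]
    push_cast
    ring_nf

theorem pow_nine_mul_heckeF_q18_eq {q : ℂ} (hq0 : q ≠ 0) :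
    q ^ 9 * heckeF 8 12 8 (q ^ 18) (q ^ 18) q =
      ∑' p : ℕ × ℕ, g₁Term q ↑(p.1 + p.2 + 1) ((p.1 : ℤ) - p.2) -
        ∑' p : ℕ × ℕ, g₁Term q (-(↑(p.1 + p.2) + 1)) ((p.1 : ℤ) - p.2) := by
  rw [heckeF_eq_tsum_sub_tsum, mul_sub, ← tsum_mul_left, ← tsum_mul_left]
  congr 1 <;> refine tsum_congr fun p => ?_ <;>
    rw [pow_nine_mul_heckeSummand_q18_eq_g₁Term hq0]
  · push_cast
    rfl
  · rw [← g₁Term_neg_right]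
    push_cast
    ring_nf

theorem stmt13 (q : ℂ) (hq : ‖q‖ < 1) (hq0 : q ≠ 0) :
    (∑' n : ℕ, q ^ (5 * n ^ 2 + 4 * n) * (1 - q ^ (2 * n + 1)) *
        ∑ j ∈ Finset.Icc (-(n : ℤ)) (n : ℤ), (-1 : ℂ) ^ j * q ^ (-j ^ 2)) =
      heckeF 8 12 8 (q ^ 8) (q ^ 8) q + q ^ 9 * heckeF 8 12 8 (q ^ 18) (q ^ 18) q := by
  have hbound₁ (n : ℕ) (j : ℤ) (hj : |j| ≤ n) : ‖g₁Term q n j‖ ≤ ‖q‖ ^ n := by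
    have := sq_le_sq' (abs_le.mp hj).1 (abs_le.mp hj).2
    exact norm_g₁Term_le hq.le hq0 (by nlinarith)
  have hbound₂ (n : ℕ) (j : ℤ) (hj : |j| ≤ n) : ‖g₁Term q (-(n + 1)) j‖ ≤ ‖q‖ ^ n := by
    have := sq_le_sq' (abs_le.mp hj).1 (abs_le.mp hj).2
    exact norm_g₁Term_le hq.le hq0 (by nlinarith)
  have h₁ := hasSum_sum_Icc_of_hasSum_antidiagonal (g := fun n j => g₁Term q n j)
    (summable_of_norm_le_pow (norm_nonneg q) hq hbound₁ 0).hasSum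
    (summable_of_norm_le_pow (norm_nonneg q) hq hbound₁ 1).hasSum
  have h₂ := hasSum_sum_Icc_of_hasSum_antidiagonal (g := fun n j => g₁Term q (-(n + 1)) j)
    (summable_of_norm_le_pow (norm_nonneg q) hq hbound₂ 0).hasSum
    (summable_of_norm_le_pow (norm_nonneg q) hq hbound₂ 1).hasSum
  simp only [add_zero] at h₁ h₂
  rw [tsum_congr (g₁_summand_eq hq0), (h₁.sub h₂).tsum_eq, heckeF_q8_eq hq0,
    pow_nine_mul_heckeF_q18_eq hq0]
  ring
end
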